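/- Let t ≥ 2 and n ≥ 2t + 4 be integers, let c be an edge-coloring of K_n that contains no rainbow copy of P₄ ∪ tP₂, let H be a rainbow subgraph of K_n isomorphic to (t + 2)P₂ with components P₂¹, …, P₂^{t+2}, and let G be a rainbow subgraph of K_n whose edge set contains E(H). Then for all i ≠ j in {1, …, t + 2}, no edge of G joins a vertex of P₂^i to a vertex of P₂^j; consequently G has exactly t + 2 edges inside V(H). -/

import Mathlib

/-- The disjoint union of `k` copies of a graph `G`, on vertex set `Fin k × V`. -/
def SimpleGraph.multiCopy (k : ℕ) {V : Type*} (G : SimpleGraph V) :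
    SimpleGraph (Fin k × V) where
  Adj a b := a.1 = b.1 ∧ G.Adj a.2 b.2
  symm := by
    constructor
    intro a b h
    exact ⟨h.1.symm, h.2.symm⟩
  loopless := by
    constructor
    intro a h
    exact G.loopless.irrefl _ h.2

/-- The disjoint union of two graphs `G` and `H`, on vertex set `V ⊕ W`. -/
def SimpleGraph.disjUnion {V W : Type*} (G : SimpleGraph V) (H : SimpleGraph W) :
    SimpleGraph (V ⊕ W) where
  Adj a b :=
    match a, b with
    | Sum.inl a, Sum.inl b => G.Adj a b
    | Sum.inr a, Sum.inr b => H.Adj a b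
    | _, _ => False
  symm := by
    constructor
    rintro (a | a) (b | b) h <;> simp only at h ⊢
    · exact h.symm
    · exact h.symm
  loopless := by
    constructor
    rintro (a | a) h <;> simp only at h
    · exact G.loopless.irrefl _ h
    · exact H.loopless.irrefl _ h

/-- The linear forest `k P₄ ∪ t P₂`. -/
def kP4tP2 (k t : ℕ) : SimpleGraph ((Fin k × Fin 4) ⊕ (Fin t × Fin 2)) :=
  (SimpleGraph.multiCopy k (SimpleGraph.pathGraph 4)).disjUnion
    (SimpleGraph.multiCopy t (SimpleGraph.pathGraph 2))

/-- The edge-coloring `c` of `K_n` admits a rainbow copy of `H`: there is an injection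
of the vertices of `H` into `Fin n` such that distinct edges of `H` get distinct colors. -/
def HasRainbowCopy {V : Type*} (n : ℕ) (c : Sym2 (Fin n) → ℕ) (H : SimpleGraph V) : Prop :=
  ∃ f : V ↪ Fin n, Set.InjOn (fun e => c (Sym2.map (⇑f) e)) H.edgeSet

/-- The number of colors used by an edge-coloring `c` on the edges of `K_n`. -/
noncomputable def colorCount (n : ℕ) (c : Sym2 (Fin n) → ℕ) : ℕ :=
  (c '' (⊤ : SimpleGraph (Fin n)).edgeSet).ncard

/-- The anti-Ramsey number `AR(n, H)`: the maximum number of colors in an edge-coloring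
of `K_n` containing no rainbow copy of `H`. -/
noncomputable def AR {V : Type*} (n : ℕ) (H : SimpleGraph V) : ℕ :=
  sSup {m : ℕ | ∃ c : Sym2 (Fin n) → ℕ, colorCount n c = m ∧ ¬ HasRainbowCopy n c H}

/-- The set of edges of `G` with both endpoints in `A` (the edges of `G[A]`). -/
def edgesInside {α : Type*} (G : SimpleGraph α) (A : Set α) : Set (Sym2 α) :=
  {e ∈ G.edgeSet | ∀ v ∈ e, v ∈ A}

/-- The set of edges of `G` with one endpoint in `A` and the other in `B`,
i.e. `[A, B]_G`. -/
def edgesBetween {α : Type*} (G : SimpleGraph α) (A B : Set α) : Set (Sym2 α) :=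
  {e ∈ G.edgeSet | ∃ u v, e = s(u, v) ∧ u ∈ A ∧ v ∈ B}

/- If the rainbow subgraph `G` had an edge `f (i, a) — f (j, b)` between two components, then
`f (i, a + 1), f (i, a), f (j, b), f (j, b + 1)` would be a path `P₄` in `G`, and together with the
remaining `t` components it would form a copy of `P₄ ∪ tP₂` in `G`, rainbow because `G` is.
Without such edges, the edges of `G` inside the copy of `(t + 2)P₂` are just its `t + 2` edges. -/

open SimpleGraph Function

theorem hasRainbowCopy_of_isContained {V : Type*} {n : ℕ} {c : Sym2 (Fin n) → ℕ}
    {H : SimpleGraph V} {G : SimpleGraph (Fin n)} (hG : Set.InjOn c G.edgeSet) (hHG : H ⊑ G) :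
    HasRainbowCopy n c H := by
  obtain ⟨φ⟩ := hHG
  refine ⟨⟨φ, φ.injective⟩, fun e₁ he₁ e₂ he₂ hc ↦ ?_⟩
  exact Sym2.map.injective φ.injective
    (hG (φ.toHom.map_mem_edgeSet he₁) (φ.toHom.map_mem_edgeSet he₂) hc)

theorem multiCopy_pathGraph_two_adj {k : ℕ} {p q : Fin k × Fin 2} :
    (multiCopy k (pathGraph 2)).Adj p q ↔ p.1 = q.1 ∧ p.2 ≠ q.2 := by
  simp [multiCopy, pathGraph_two_eq_top]

theorem Fin.two_add_one_ne (x : Fin 2) : x + 1 ≠ x := by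
  fin_cases x <;> decide

theorem Fin.exists_injective_ne_ne {t : ℕ} {i j : Fin (t + 2)} (hij : i ≠ j) :
    ∃ π : Fin t → Fin (t + 2), Injective π ∧ ∀ k, π k ≠ i ∧ π k ≠ j := by
  obtain ⟨j', rfl⟩ := Fin.exists_succAbove_eq hij.symm
  refine ⟨i.succAbove ∘ j'.succAbove,
    Fin.succAbove_right_injective.comp Fin.succAbove_right_injective, fun k ↦ ⟨?_, ?_⟩⟩
  · exact Fin.succAbove_ne i _
  · exact Fin.succAbove_right_injective.ne (Fin.succAbove_ne j' k)

section CrossEdge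

variable {t n : ℕ} {f : (Fin (t + 2) × Fin 2) ↪ Fin n} {G : SimpleGraph (Fin n)}

def crossPlacement (i j : Fin (t + 2)) (a b : Fin 2) (π : Fin t → Fin (t + 2)) :
    (Fin 1 × Fin 4) ⊕ (Fin t × Fin 2) → Fin (t + 2) × Fin 2 :=
  Sum.elim (fun r ↦ ![(i, a + 1), (i, a), (j, b), (j, b + 1)] r.2) (Prod.map π id)

theorem crossPlacement_injective {i j : Fin (t + 2)} (hij : i ≠ j) (a b : Fin 2)
    {π : Fin t → Fin (t + 2)} (hπ : Injective π) (hπij : ∀ k, π k ≠ i ∧ π k ≠ j) :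
    Injective (crossPlacement i j a b π) := by
  refine Injective.sumElim ?_ (hπ.prodMap injective_id) ?_
  · rintro ⟨q, r⟩ ⟨q', r'⟩ h
    fin_cases q; fin_cases q'
    fin_cases r <;> fin_cases r' <;>
      simp_all [Prod.ext_iff, (Fin.two_add_one_ne _).symm, hij.symm]
  · rintro ⟨_, r⟩ ⟨k, _⟩ h
    replace h := congrArg Prod.fst h
    obtain ⟨hi, hj⟩ := hπij k
    fin_cases r <;> first | exact hi h.symm | exact hj h.symm

theorem isContained_of_cross_adj
    (hcomp : ∀ p x y, x ≠ y → G.Adj (f (p, x)) (f (p, y)))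
    {i j : Fin (t + 2)} (hij : i ≠ j) {a b : Fin 2} (hcross : G.Adj (f (i, a)) (f (j, b))) :
    kP4tP2 1 t ⊑ G := by
  obtain ⟨π, hπ, hπij⟩ := Fin.exists_injective_ne_ne hij
  refine ⟨⟨⟨f ∘ crossPlacement i j a b π, ?_⟩,
    f.injective.comp (crossPlacement_injective hij a b hπ hπij)⟩⟩
  rintro (⟨q, r⟩ | ⟨k, s⟩) (⟨q', r'⟩ | ⟨k', s'⟩) h
  · replace h : r.val + 1 = r'.val ∨ r'.val + 1 = r.val := pathGraph_adj.mp h.2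
    fin_cases r <;> fin_cases r' <;> simp only [crossPlacement, comp_apply, Sum.elim_inl] <;>
      first
        | exact hcomp _ _ _ (Fin.two_add_one_ne _)
        | exact hcomp _ _ _ (Fin.two_add_one_ne _).symm
        | exact hcross
        | exact hcross.symm
        | exact absurd h (by decide)
  · exact h.elim
  · exact h.elim
  · obtain ⟨rfl, hs⟩ := h
    exact hcomp _ _ _ hs.ne

end CrossEdge

section EdgesInside

variable {k n : ℕ} {f : (Fin k × Fin 2) ↪ Fin n} {G : SimpleGraph (Fin n)}

theorem adj_of_multiCopy_edgeSet
    (hHG : ∀ e ∈ (multiCopy k (pathGraph 2)).edgeSet, Sym2.map (⇑f) e ∈ G.edgeSet)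
    (p : Fin k) {x y : Fin 2} (hxy : x ≠ y) : G.Adj (f (p, x)) (f (p, y)) :=
  hHG s((p, x), (p, y)) (multiCopy_pathGraph_two_adj.mpr ⟨rfl, hxy⟩)

theorem edgesInside_range_eq
    (hcomp : ∀ p x y, x ≠ y → G.Adj (f (p, x)) (f (p, y)))
    (hcross : ∀ i j, i ≠ j → ∀ a b, ¬ G.Adj (f (i, a)) (f (j, b))) :
    edgesInside G (Set.range f) = Set.range fun p ↦ s(f (p, 0), f (p, 1)) := by
  ext e
  induction e using Sym2.ind with
  | _ u v =>
  constructor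
  · rintro ⟨he, hin⟩
    obtain ⟨⟨i, x⟩, rfl⟩ := hin u (Sym2.mem_mk_left u v)
    obtain ⟨⟨j, y⟩, rfl⟩ := hin v (Sym2.mem_mk_right _ v)
    obtain rfl : i = j := by_contra fun hij ↦ hcross i j hij x y he
    have hxy : x ≠ y := fun h ↦ he.ne (h ▸ rfl)
    refine ⟨i, ?_⟩
    fin_cases x <;> fin_cases y <;> first | exact absurd rfl hxy | rfl | exact Sym2.eq_swap
  · rintro ⟨p, hp⟩
    rw [← hp]
    refine ⟨hcomp p 0 1 (by decide), fun w hw ↦ ?_⟩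
    rcases Sym2.mem_iff.mp hw with rfl | rfl <;> exact Set.mem_range_self _

theorem ncard_range_component_edges :
    (Set.range fun p : Fin k ↦ s(f (p, 0), f (p, 1))).ncard = k := by
  rw [← Set.image_univ, Set.ncard_image_of_injective, Set.ncard_univ, Nat.card_fin]
  intro p q h
  rcases Sym2.eq_iff.mp h with ⟨h, -⟩ | ⟨h, -⟩
  · exact congrArg Prod.fst (f.injective h)
  · exact absurd (congrArg Prod.snd (f.injective h)) zero_ne_one

end EdgesInside

theorem stmt_12_general (t n : ℕ)
    (c : Sym2 (Fin n) → ℕ)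
    (hno : ¬ HasRainbowCopy n c (kP4tP2 1 t))
    (f : (Fin (t + 2) × Fin 2) ↪ Fin n)
    (G : SimpleGraph (Fin n))
    (hG : Set.InjOn c G.edgeSet)
    (hHG : ∀ e ∈ (SimpleGraph.multiCopy (t + 2) (SimpleGraph.pathGraph 2)).edgeSet,
      Sym2.map (⇑f) e ∈ G.edgeSet) :
    (∀ i j : Fin (t + 2), i ≠ j → ∀ a b : Fin 2, ¬ G.Adj (f (i, a)) (f (j, b))) ∧
    (edgesInside G (Set.range ⇑f)).ncard = t + 2 := by
  have hcomp : ∀ p x y, x ≠ y → G.Adj (f (p, x)) (f (p, y)) :=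
    fun p _ _ ↦ adj_of_multiCopy_edgeSet hHG p
  have hcross : ∀ i j : Fin (t + 2), i ≠ j → ∀ a b : Fin 2, ¬ G.Adj (f (i, a)) (f (j, b)) :=
    fun _ _ hij _ _ hadj ↦
      hno (hasRainbowCopy_of_isContained hG (isContained_of_cross_adj hcomp hij hadj))
  exact ⟨hcross, by rw [edgesInside_range_eq hcomp hcross, ncard_range_component_edges]⟩

/-- Let `t ≥ 2`, `n ≥ 2t + 4`, let `c` be an edge-coloring of `K_n` with
no rainbow copy of `P₄ ∪ tP₂`, let `f` be a rainbow copy of `(t + 2)P₂` in `K_n`, and let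
`G` be a rainbow subgraph of `K_n` containing the edges of that copy. Then no edge of `G`
joins vertices of two distinct `P₂`-components, and `G` has exactly `t + 2` edges inside
the vertex set of the copy. -/
theorem stmt_12 (t n : ℕ) (ht : 2 ≤ t) (hn : 2 * t + 4 ≤ n)
    (c : Sym2 (Fin n) → ℕ)
    (hno : ¬ HasRainbowCopy n c (kP4tP2 1 t))
    (f : (Fin (t + 2) × Fin 2) ↪ Fin n)
    (hH : Set.InjOn (fun e => c (Sym2.map (⇑f) e))
      (SimpleGraph.multiCopy (t + 2) (SimpleGraph.pathGraph 2)).edgeSet)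
    (G : SimpleGraph (Fin n))
    (hG : Set.InjOn c G.edgeSet)
    (hHG : ∀ e ∈ (SimpleGraph.multiCopy (t + 2) (SimpleGraph.pathGraph 2)).edgeSet,
      Sym2.map (⇑f) e ∈ G.edgeSet) :
    (∀ i j : Fin (t + 2), i ≠ j → ∀ a b : Fin 2, ¬ G.Adj (f (i, a)) (f (j, b))) ∧
    (edgesInside G (Set.range ⇑f)).ncard = t + 2 :=
  stmt_12_general t n c hno f G hG hHG
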